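/- Let C be a convex body in ℝ^d, d ≥ 2. If P is a generalized billiard trajectory of C, then P cannot be translated into the interior of C; that is, there is no t ∈ ℝ^d with t + {p_1, …, p_n} ⊆ int C, where p_1, …, p_n are the vertices of P. -/

import Mathlib

/-!
At each vertex the bisector `b i` is a nonzero inward normal of a hyperplane supporting `C`
at `p i`, so `t + p i ∈ interior C` forces `0 < ⟪b i, t⟫`. On the other hand
`b i = u i - u (i - 1)` for the unit edge vectors `u i` of the path, so the bisectors telescope
to `0` around the closed path, and summing `⟪b i, t⟫` over one period gives `0 < 0`.
-/

open scoped RealInnerProductSpace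

noncomputable section

/-- A closed polygonal path in `ℝ^d` with `n` sides, encoded as an `n`-periodic
sequence of vertices indexed by `ℤ`, with consecutive vertices distinct. -/
def IsClosedPolygonalPath {d : ℕ} (n : ℕ) (p : ℤ → EuclideanSpace ℝ (Fin d)) : Prop :=
  2 ≤ n ∧ (∀ i : ℤ, p (i + (n : ℤ)) = p i) ∧ (∀ i : ℤ, p i ≠ p (i + 1))

/-- The (non-normalized) inner angle bisector direction of the path `p` at the vertex `p i`. -/
def bisector {d : ℕ} (p : ℤ → EuclideanSpace ℝ (Fin d)) (i : ℤ) : EuclideanSpace ℝ (Fin d) :=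
  ‖p (i - 1) - p i‖⁻¹ • (p (i - 1) - p i) + ‖p (i + 1) - p i‖⁻¹ • (p (i + 1) - p i)

/-- `p` is an `n`-periodic generalized billiard trajectory of `C`: all vertices lie on the
boundary of `C` and at each vertex the inner angle bisector is a nonzero inward normal of a
hyperplane supporting `C` at that vertex. -/
def IsGenBilliardTraj {d : ℕ} (C : Set (EuclideanSpace ℝ (Fin d))) (n : ℕ)
    (p : ℤ → EuclideanSpace ℝ (Fin d)) : Prop :=
  IsClosedPolygonalPath n p ∧
    ∀ i : ℤ, p i ∈ frontier C ∧ bisector p i ≠ 0 ∧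
      ∀ q ∈ C, 0 ≤ ⟪bisector p i, q - p i⟫

/-- The length of the closed polygonal path with vertices `p 0, p 1, …, p (n-1)`. -/
def pathLength {d : ℕ} (n : ℕ) (p : ℤ → EuclideanSpace ℝ (Fin d)) : ℝ :=
  ∑ i ∈ Finset.range n, ‖p ((i : ℤ) + 1) - p (i : ℤ)‖

open Finset

theorem Function.Periodic.sum_range_sub_pred_eq_zero {M : Type*} [AddCommGroup M]
    {f : ℤ → M} {n : ℕ} (hf : Function.Periodic f n) :
    ∑ i ∈ range n, (f i - f (i - 1)) = 0 := by
  have htele := sum_range_sub (fun k : ℕ => f ((k : ℤ) - 1)) n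
  push_cast at htele
  simp only [add_sub_cancel_right] at htele
  rw [htele, ← hf (-1), neg_add_eq_sub, sub_self]

theorem inner_pos_of_supports_of_add_mem_interior {E : Type*} [NormedAddCommGroup E]
    [InnerProductSpace ℝ E] {C : Set E} {b x t : E} (hb : b ≠ 0)
    (hsupp : ∀ q ∈ C, 0 ≤ ⟪b, q - x⟫) (ht : t + x ∈ interior C) :
    0 < ⟪b, t⟫ := by
  have hpath : Filter.Tendsto (fun s : ℝ => t + x - s • b) (nhdsWithin 0 (Set.Ioi 0))
      (nhds (t + x)) := by
    have : Continuous (fun s : ℝ => t + x - s • b) := by fun_prop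
    exact (this.tendsto' 0 (t + x) (by simp)).mono_left nhdsWithin_le_nhds
  obtain ⟨s, hs_int, hs_pos⟩ :=
    ((hpath.eventually (isOpen_interior.mem_nhds ht)).and self_mem_nhdsWithin).exists
  have hs : 0 ≤ ⟪b, t⟫ - s * ‖b‖ ^ 2 := by
    have := hsupp _ (interior_subset hs_int)
    rwa [add_sub_right_comm, add_sub_cancel_right, inner_sub_right, real_inner_smul_right,
      real_inner_self_eq_norm_sq] at this
  have : 0 < s * ‖b‖ ^ 2 := mul_pos hs_pos (by positivity)
  linarith

section Bisector

variable {d : ℕ}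

def edgeDir (p : ℤ → EuclideanSpace ℝ (Fin d)) (i : ℤ) : EuclideanSpace ℝ (Fin d) :=
  ‖p (i + 1) - p i‖⁻¹ • (p (i + 1) - p i)

theorem bisector_eq_edgeDir_sub (p : ℤ → EuclideanSpace ℝ (Fin d)) (i : ℤ) :
    bisector p i = edgeDir p i - edgeDir p (i - 1) := by
  rw [bisector, edgeDir, edgeDir, sub_add_cancel, ← neg_sub (p i), norm_neg, smul_neg]
  abel

theorem sum_range_bisector_eq_zero {n : ℕ} {p : ℤ → EuclideanSpace ℝ (Fin d)}
    (hp : Function.Periodic p n) :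
    ∑ i ∈ range n, bisector p i = 0 := by
  have hu : Function.Periodic (edgeDir p) n := fun i => by
    rw [edgeDir, edgeDir, add_right_comm, hp, hp]
  simpa only [bisector_eq_edgeDir_sub] using hu.sum_range_sub_pred_eq_zero

end Bisector

theorem gen_billiard_traj_not_translatable_into_interior_general
    {d : ℕ} (C : Set (EuclideanSpace ℝ (Fin d)))
    (n : ℕ) (p : ℤ → EuclideanSpace ℝ (Fin d)) (hp : IsGenBilliardTraj C n p) :
    ¬ ∃ t : EuclideanSpace ℝ (Fin d), ∀ i : ℤ, t + p i ∈ interior C := by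
  rintro ⟨t, ht⟩
  obtain ⟨⟨hn, hper, -⟩, hbil⟩ := hp
  have hpos : ∀ i : ℤ, 0 < ⟪bisector p i, t⟫ := fun i =>
    inner_pos_of_supports_of_add_mem_interior (hbil i).2.1 (hbil i).2.2 (ht i)
  have hsum_pos : 0 < ⟪∑ i ∈ range n, bisector p i, t⟫ := by
    rw [sum_inner]
    exact sum_pos (fun i _ => hpos i) (nonempty_range_iff.mpr (by omega))
  rw [sum_range_bisector_eq_zero hper, inner_zero_left] at hsum_pos
  exact hsum_pos.false

/-- A generalized billiard trajectory of a convex body `C` cannot be translated into the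
interior of `C`. -/
theorem gen_billiard_traj_not_translatable_into_interior
    {d : ℕ} (hd : 2 ≤ d) (C : Set (EuclideanSpace ℝ (Fin d)))
    (hCc : IsCompact C) (hCconv : Convex ℝ C) (hCint : (interior C).Nonempty)
    (n : ℕ) (p : ℤ → EuclideanSpace ℝ (Fin d)) (hp : IsGenBilliardTraj C n p) :
    ¬ ∃ t : EuclideanSpace ℝ (Fin d), ∀ i : ℤ, t + p i ∈ interior C :=
  gen_billiard_traj_not_translatable_into_interior_general C n p hp
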